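/- arXiv:2604.27378 — 3 statements merged into one kernel-verified Lean document; each statement's English description precedes it below -/
import Mathlib

section
/- Let U be a p×p real symmetric negative definite matrix, γ > 0, and let a, b > 0 satisfy a ≥ (γ/2)‖U‖ and b ≥ 2a²/(γ·λ_min(−U)), where ‖U‖ is the spectral norm and λ_min(−U) the smallest eigenvalue of −U. Let Σ⁽⁰⁾ be a real symmetric matrix with aI_p ⪯ Σ⁽⁰⁾ ⪯ bI_p, and define recursively Σ⁽ˡ⁺¹⁾ = Σ⁽ˡ⁾ + a²(Σ⁽ˡ⁾)⁻¹ + (γ/2)U. Then for every l ≥ 0, Σ⁽ˡ⁾ is symmetric and satisfies aI_p ⪯ Σ⁽ˡ⁾ ⪯ bI_p. -/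
/-!
On `[a, b]` the function `x ↦ x + a² / x` takes values in `[2a, b + a²/b]`, so by the continuous
functional calculus `a ⪯ Σ ⪯ b` gives `2a ⪯ Σ + a² Σ⁻¹ ⪯ b + a²/b`. The hypotheses on `a` and `b`
put the spectrum of `(γ/2) U` in `[-a, -a²/b]`; adding the two Loewner bounds keeps the next
iterate between `a` and `b`.
-/

open Matrix Set
open scoped Matrix.Norms.L2Operator MatrixOrder Ring

theorem two_mul_le_add_sq_div {a x : ℝ} (hx : 0 < x) : 2 * a ≤ x + a ^ 2 / x := by
  rw [← sub_nonneg]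
  have : x + a ^ 2 / x - 2 * a = (x - a) ^ 2 / x := by field_simp; ring
  rw [this]
  positivity

theorem add_sq_div_le_add_sq_div {a b x : ℝ} (ha : 0 < a) (hx : x ∈ Icc a b) :
    x + a ^ 2 / x ≤ b + a ^ 2 / b := by
  obtain ⟨hax, hxb⟩ := hx
  have hx0 : 0 < x := ha.trans_le hax
  have hb0 : 0 < b := hx0.trans_le hxb
  rw [← sub_nonneg]
  have : b + a ^ 2 / b - (x + a ^ 2 / x) = (b - x) * (b * x - a ^ 2) / (b * x) := by
    field_simp; ring
  rw [this]
  have : a ^ 2 ≤ b * x := by nlinarith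
  apply div_nonneg (mul_nonneg _ _) (by positivity) <;> linarith

section StarOrderedAlgebra

variable {A : Type*} [Ring A] [StarRing A] [PartialOrder A] [StarOrderedRing A] [Algebra ℝ A]
  [StarModule ℝ A]

theorem IsSelfAdjoint.of_algebraMap_le {r : ℝ} {s : A} (h : algebraMap ℝ A r ≤ s) :
    IsSelfAdjoint s := by
  simpa using (sub_nonneg.2 h).isSelfAdjoint.add (.algebraMap A (.all r))

variable [TopologicalSpace A] [ContinuousFunctionalCalculus ℝ A IsSelfAdjoint]
  [NonnegSpectrumClass ℝ A]

theorem spectrum_subset_Icc_of_algebraMap_le_of_le_algebraMap {a b : ℝ} {s : A}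
    (hsa : algebraMap ℝ A a ≤ s) (hsb : s ≤ algebraMap ℝ A b) : spectrum ℝ s ⊆ Icc a b := by
  have hs := IsSelfAdjoint.of_algebraMap_le hsa
  exact fun x hx => ⟨(algebraMap_le_iff_le_spectrum hs).1 hsa x hx,
    (le_algebraMap_iff_spectrum_le hs).1 hsb x hx⟩

theorem algebraMap_le_add_smul_ringInverse_le_algebraMap {a b : ℝ} {s : A} (ha : 0 < a)
    (hsa : algebraMap ℝ A a ≤ s) (hsb : s ≤ algebraMap ℝ A b) :
    algebraMap ℝ A (2 * a) ≤ s + a ^ 2 • s⁻¹ʳ ∧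
      s + a ^ 2 • s⁻¹ʳ ≤ algebraMap ℝ A (b + a ^ 2 / b) := by
  have hs := IsSelfAdjoint.of_algebraMap_le hsa
  have hspec := spectrum_subset_Icc_of_algebraMap_le_of_le_algebraMap hsa hsb
  have hpos : ∀ x ∈ spectrum ℝ s, 0 < x := fun x hx => ha.trans_le (hspec hx).1
  have hunit : IsUnit s := spectrum.isUnit_of_zero_notMem ℝ fun h => (hpos 0 h).false
  have hinv : ContinuousOn (fun x : ℝ => x⁻¹) (spectrum ℝ s) :=
    continuousOn_inv₀.mono fun x hx => (hpos x hx).ne'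
  have hf : ContinuousOn (fun x : ℝ => x + a ^ 2 / x) (spectrum ℝ s) :=
    continuousOn_id.add (continuousOn_const.div continuousOn_id fun x hx => (hpos x hx).ne')
  have hcfc : s + a ^ 2 • s⁻¹ʳ = cfc (fun x : ℝ => x + a ^ 2 / x) s := by
    simp only [div_eq_mul_inv]
    rw [cfc_add s (fun x => x) (fun x => a ^ 2 * x⁻¹) (continuousOn_id' _)
      (continuousOn_const.mul hinv), cfc_const_mul _ _ _ hinv, cfc_id' ℝ s,
      cfc_ringInverse_id s hunit]
  rw [hcfc]
  exact ⟨algebraMap_le_cfc _ _ s (fun x hx => two_mul_le_add_sq_div (hpos x hx)) hf,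
    cfc_le_algebraMap _ _ s (fun x hx => add_sq_div_le_add_sq_div ha (hspec hx)) hf⟩

theorem algebraMap_le_add_smul_ringInverse_add_le_algebraMap {a b : ℝ} {s u : A} (ha : 0 < a)
    (hsa : algebraMap ℝ A a ≤ s) (hsb : s ≤ algebraMap ℝ A b)
    (hua : algebraMap ℝ A (-a) ≤ u) (hub : u ≤ algebraMap ℝ A (-(a ^ 2 / b))) :
    algebraMap ℝ A a ≤ s + a ^ 2 • s⁻¹ʳ + u ∧ s + a ^ 2 • s⁻¹ʳ + u ≤ algebraMap ℝ A b := by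
  obtain ⟨hlow, hupp⟩ := algebraMap_le_add_smul_ringInverse_le_algebraMap ha hsa hsb
  constructor
  · calc algebraMap ℝ A a = algebraMap ℝ A (2 * a) + algebraMap ℝ A (-a) := by
          rw [← map_add]; ring_nf
      _ ≤ s + a ^ 2 • s⁻¹ʳ + u := add_le_add hlow hua
  · calc s + a ^ 2 • s⁻¹ʳ + u
        ≤ algebraMap ℝ A (b + a ^ 2 / b) + algebraMap ℝ A (-(a ^ 2 / b)) := add_le_add hupp hub
      _ = algebraMap ℝ A b := by rw [← map_add]; ring_nf

end StarOrderedAlgebra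

namespace Matrix

variable {n : Type*} [Fintype n] [DecidableEq n]

theorem algebraMap_le_iff_posSemidef {S : Matrix n n ℝ} {r : ℝ} :
    algebraMap ℝ _ r ≤ S ↔ (S - r • 1).PosSemidef := by
  rw [le_iff, Algebra.algebraMap_eq_smul_one]

theorem le_algebraMap_iff_posSemidef {S : Matrix n n ℝ} {r : ℝ} :
    S ≤ algebraMap ℝ _ r ↔ (r • 1 - S).PosSemidef := by
  rw [le_iff, Algebra.algebraMap_eq_smul_one]

theorem abs_le_l2_opNorm_of_mem_spectrum {S : Matrix n n ℝ} {x : ℝ} (hx : x ∈ spectrum ℝ S) :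
    |x| ≤ ‖S‖ := by
  have : Nontrivial (Matrix n n ℝ) := by
    by_contra h
    rw [not_nontrivial_iff_subsingleton] at h
    simp [spectrum.of_subsingleton] at hx
  exact spectrum.norm_le_norm_of_mem hx

theorem PosDef.iInf_eigenvalues_le_of_mem_spectrum {S : Matrix n n ℝ} (hS : S.PosDef) {x : ℝ}
    (hx : x ∈ spectrum ℝ S) : ⨅ i, hS.1.eigenvalues i ≤ x := by
  rw [hS.1.spectrum_real_eq_range_eigenvalues] at hx
  obtain ⟨i, rfl⟩ := hx
  exact ciInf_le (Finite.bddBelow_range _) i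

theorem PosDef.iInf_eigenvalues_pos [Nonempty n] {S : Matrix n n ℝ} (hS : S.PosDef) :
    0 < ⨅ i, hS.1.eigenvalues i := by
  obtain ⟨i, hi⟩ := exists_eq_ciInf_of_finite (f := hS.1.eigenvalues)
  exact hi ▸ hS.eigenvalues_pos i

theorem algebraMap_le_smul_le_algebraMap_of_posDef_neg {γ a b : ℝ} (hγ : 0 < γ) (hb : 0 < b)
    {U : Matrix n n ℝ} (hU : (-U).PosDef) (hna : γ / 2 * ‖U‖ ≤ a)
    (hnb : 2 * a ^ 2 / (γ * ⨅ i, hU.1.eigenvalues i) ≤ b) :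
    algebraMap ℝ _ (-a) ≤ (γ / 2) • U ∧ (γ / 2) • U ≤ algebraMap ℝ _ (-(a ^ 2 / b)) := by
  have hUsa : IsSelfAdjoint U := by simpa using hU.1.isSelfAdjoint.neg
  rw [← cfc_const_mul_id (γ / 2) U]
  constructor
  · refine algebraMap_le_cfc _ _ U fun x hx => ?_
    have := abs_le_l2_opNorm_of_mem_spectrum hx
    nlinarith [neg_abs_le x]
  · refine cfc_le_algebraMap _ _ U fun x hx => ?_
    have hx' : -x ∈ spectrum ℝ (-U) := by rw [← spectrum.neg_eq]; exact neg_mem_neg.2 hx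
    have hμx := hU.iInf_eigenvalues_le_of_mem_spectrum hx'
    have : Nonempty n := by
      obtain ⟨i, -⟩ := hU.1.spectrum_real_eq_range_eigenvalues ▸ hx'
      exact ⟨i⟩
    have hμ := hU.iInf_eigenvalues_pos
    rw [div_le_iff₀ (by positivity)] at hnb
    rw [le_neg, ← neg_mul, div_le_iff₀ hb]
    nlinarith

end Matrix

theorem stmt1_general {p : ℕ} (γ a b : ℝ) (hγ : 0 < γ) (ha : 0 < a) (hb : 0 < b)
    (U : Matrix (Fin p) (Fin p) ℝ) (hU : (-U).PosDef)
    (hna : γ / 2 * ‖U‖ ≤ a)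
    (hnb : 2 * a ^ 2 / (γ * ⨅ i, hU.1.eigenvalues i) ≤ b)
    (Sig : ℕ → Matrix (Fin p) (Fin p) ℝ)
    (h0a : (Sig 0 - a • (1 : Matrix (Fin p) (Fin p) ℝ)).PosSemidef)
    (h0b : (b • (1 : Matrix (Fin p) (Fin p) ℝ) - Sig 0).PosSemidef)
    (hrec : ∀ l : ℕ, Sig (l + 1) = Sig l + a ^ 2 • (Sig l)⁻¹ + (γ / 2) • U) :
    ∀ l : ℕ, (Sig l).IsSymm ∧
      (Sig l - a • (1 : Matrix (Fin p) (Fin p) ℝ)).PosSemidef ∧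
      (b • (1 : Matrix (Fin p) (Fin p) ℝ) - Sig l).PosSemidef := by
  obtain ⟨hUa, hUb⟩ := algebraMap_le_smul_le_algebraMap_of_posDef_neg hγ hb hU hna hnb
  have bounds : ∀ l, algebraMap ℝ _ a ≤ Sig l ∧ Sig l ≤ algebraMap ℝ _ b := by
    intro l
    induction l with
    | zero => exact ⟨algebraMap_le_iff_posSemidef.2 h0a, le_algebraMap_iff_posSemidef.2 h0b⟩
    | succ l ih =>
      rw [hrec l, nonsing_inv_eq_ringInverse]
      exact algebraMap_le_add_smul_ringInverse_add_le_algebraMap ha ih.1 ih.2 hUa hUb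
  intro l
  obtain ⟨hla, hlb⟩ := bounds l
  exact ⟨isHermitian_iff_isSymm.1 (IsSelfAdjoint.of_algebraMap_le hla),
    algebraMap_le_iff_posSemidef.1 hla, le_algebraMap_iff_posSemidef.1 hlb⟩

/-- Let `U` be a real symmetric negative definite `p × p` matrix (i.e. `-U`
is positive definite), `γ > 0`, and `a, b > 0` with `a ≥ (γ/2)‖U‖` (`‖·‖` the spectral /
L2-operator norm) and `b ≥ 2a²/(γ λ_min(-U))`, where `λ_min(-U) = ⨅ i, eigenvalues i` is the
smallest eigenvalue of `-U`.  If `Sig 0` is symmetric with `a•I ⪯ Sig 0 ⪯ b•I` and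
`Sig (l+1) = Sig l + a²•(Sig l)⁻¹ + (γ/2)•U`, then every `Sig l` is symmetric and satisfies
`a•I ⪯ Sig l ⪯ b•I`. -/
theorem stmt1 {p : ℕ} (γ a b : ℝ) (hγ : 0 < γ) (ha : 0 < a) (hb : 0 < b)
    (U : Matrix (Fin p) (Fin p) ℝ) (hU : (-U).PosDef)
    (hna : γ / 2 * ‖U‖ ≤ a)
    (hnb : 2 * a ^ 2 / (γ * ⨅ i, hU.1.eigenvalues i) ≤ b)
    (Sig : ℕ → Matrix (Fin p) (Fin p) ℝ)
    (hsym0 : (Sig 0).IsSymm)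
    (h0a : (Sig 0 - a • (1 : Matrix (Fin p) (Fin p) ℝ)).PosSemidef)
    (h0b : (b • (1 : Matrix (Fin p) (Fin p) ℝ) - Sig 0).PosSemidef)
    (hrec : ∀ l : ℕ, Sig (l + 1) = Sig l + a ^ 2 • (Sig l)⁻¹ + (γ / 2) • U) :
    ∀ l : ℕ, (Sig l).IsSymm ∧
      (Sig l - a • (1 : Matrix (Fin p) (Fin p) ℝ)).PosSemidef ∧
      (b • (1 : Matrix (Fin p) (Fin p) ℝ) - Sig l).PosSemidef :=
  stmt1_general γ a b hγ ha hb U hU hna hnb Sig h0a h0b hrec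
end

section
/- Let 0 < a ≤ b and let Σ, Σ′ be p×p real symmetric matrices with aI_p ⪯ Σ ⪯ bI_p and aI_p ⪯ Σ′ ⪯ bI_p. Then Tr((Σ′⁻¹ − Σ⁻¹)(Σ′ − Σ)) ≤ −(1/b²)·‖Σ′ − Σ‖_F². -/
/-!
With `D = S' - S`, the resolvent identity `S'⁻¹ - S⁻¹ = -S'⁻¹ D S⁻¹` turns the left-hand side
into `-Tr(S'⁻¹ D S⁻¹ D)`. Inverting `S, S' ⪯ b I` gives `S⁻¹, S'⁻¹ ⪰ b⁻¹ I`, and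
`Tr(P X) ≥ c Tr X` whenever `P ⪰ c I` and `X ⪰ 0`; peeling off the two inverses one at a time
bounds `Tr(S'⁻¹ D S⁻¹ D)` below by `b⁻² Tr(D²)`.
-/

open Matrix
open scoped MatrixOrder ComplexOrder

namespace Matrix

variable {n 𝕜 : Type*} [DecidableEq n] [RCLike 𝕜]

theorem PosDef.of_smul_one_le {a : ℝ} (ha : 0 < a) {S : Matrix n n 𝕜} (h : a • 1 ≤ S) :
    S.PosDef := by
  simpa using PosDef.posSemidef_add (le_iff.mp h) (PosDef.one.smul ha)

variable [Fintype n]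

theorem PosSemidef.trace_mul_nonneg {A B : Matrix n n 𝕜} (hA : A.PosSemidef) (hB : B.PosSemidef) :
    0 ≤ (A * B).trace := by
  have hsqrt : (CFC.sqrt A)ᴴ = CFC.sqrt A := (nonneg_iff_posSemidef.mp (CFC.sqrt_nonneg A)).1
  calc (0 : 𝕜) ≤ ((CFC.sqrt A)ᴴ * B * CFC.sqrt A).trace :=
        (hB.conjTranspose_mul_mul_same _).trace_nonneg
    _ = (A * B).trace := by
        rw [hsqrt, trace_mul_cycle, CFC.sqrt_mul_sqrt_self A hA.nonneg]

theorem smul_trace_le_trace_mul {c : ℝ} {P X : Matrix n n 𝕜} (hP : c • 1 ≤ P)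
    (hX : X.PosSemidef) : c • X.trace ≤ (P * X).trace := by
  have := PosSemidef.trace_mul_nonneg hP hX
  rwa [sub_mul, trace_sub, smul_mul_assoc, one_mul, trace_smul, sub_nonneg] at this

/-- `S⁻¹ - b⁻¹ • 1 = b⁻¹ • S⁻¹ (b • 1 - S)` is a product of commuting nonnegative matrices. -/
theorem PosDef.inv_smul_one_le_inv {b : ℝ} (hb : 0 < b) {S : Matrix n n 𝕜} (hS : S.PosDef)
    (h : S ≤ b • 1) : b⁻¹ • 1 ≤ S⁻¹ := by
  have hdet : IsUnit S.det := (isUnit_iff_isUnit_det S).mp hS.isUnit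
  have hcomm : Commute S⁻¹ (b • 1 - S) :=
    ((Commute.one_right _).smul_right b).sub_right
      ((nonsing_inv_mul S hdet).trans (mul_nonsing_inv S hdet).symm)
  have key : S⁻¹ - b⁻¹ • 1 = b⁻¹ • (S⁻¹ * (b • 1 - S)) := by
    rw [mul_sub, mul_smul_comm, mul_one, nonsing_inv_mul S hdet, smul_sub, smul_smul,
      inv_mul_cancel₀ hb.ne', one_smul]
  rw [← sub_nonneg, key]
  exact smul_nonneg (inv_nonneg.mpr hb.le)
    (hcomm.mul_nonneg hS.inv.posSemidef.nonneg (sub_nonneg.mpr h))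

theorem sq_smul_trace_mul_self_le_trace {c : ℝ} (hc : 0 ≤ c) {P Q D : Matrix n n 𝕜}
    (hP : c • 1 ≤ P) (hQ : c • 1 ≤ Q) (hD : D.IsHermitian) :
    c ^ 2 • (D * D).trace ≤ (P * D * Q * D).trace := by
  have hQ₀ : Q.PosSemidef := by simpa using (PosDef.one.posSemidef.smul hc).add hQ
  have hDD : (D * D).PosSemidef := by simpa [hD.eq] using posSemidef_conjTranspose_mul_self D
  have hDQD : (D * Q * D).PosSemidef := by simpa [hD.eq] using hQ₀.conjTranspose_mul_mul_same D
  calc c ^ 2 • (D * D).trace = c • c • (D * D).trace := by rw [sq, mul_smul]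
    _ ≤ c • (Q * (D * D)).trace := smul_le_smul_of_nonneg_left (smul_trace_le_trace_mul hQ hDD) hc
    _ = c • (D * Q * D).trace := by rw [trace_mul_cycle, trace_mul_comm]
    _ ≤ (P * (D * Q * D)).trace := smul_trace_le_trace_mul hP hDQD
    _ = (P * D * Q * D).trace := by simp only [Matrix.mul_assoc]

end Matrix

theorem stmt3_general {p : ℕ} (a b : ℝ) (ha : 0 < a) (hab : a ≤ b)
    (S S' : Matrix (Fin p) (Fin p) ℝ)
    (h1 : (S - a • (1 : Matrix (Fin p) (Fin p) ℝ)).PosSemidef)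
    (h2 : (b • (1 : Matrix (Fin p) (Fin p) ℝ) - S).PosSemidef)
    (h3 : (S' - a • (1 : Matrix (Fin p) (Fin p) ℝ)).PosSemidef)
    (h4 : (b • (1 : Matrix (Fin p) (Fin p) ℝ) - S').PosSemidef) :
    ((S'⁻¹ - S⁻¹) * (S' - S)).trace ≤ -(1 / b ^ 2) * ((S' - S)ᵀ * (S' - S)).trace := by
  have hb : 0 < b := ha.trans_le hab
  have hS : S.PosDef := PosDef.of_smul_one_le ha h1
  have hS' : S'.PosDef := PosDef.of_smul_one_le ha h3
  have hD : (S' - S).IsHermitian := hS'.isHermitian.sub hS.isHermitian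
  have resolvent : S'⁻¹ - S⁻¹ = -(S'⁻¹ * (S' - S) * S⁻¹) := by
    rw [← neg_sub S S', mul_neg, neg_mul, neg_neg]
    simpa only [nonsing_inv_eq_ringInverse] using
      Ring.inverse_sub_inverse (iff_of_true hS'.isUnit hS.isUnit)
  have key := sq_smul_trace_mul_self_le_trace (inv_nonneg.mpr hb.le)
    (hS'.inv_smul_one_le_inv hb h4) (hS.inv_smul_one_le_inv hb h2) hD
  rw [smul_eq_mul, inv_pow] at key
  rw [resolvent, neg_mul, trace_neg, ← conjTranspose_eq_transpose_of_trivial, hD.eq, one_div,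
    neg_mul]
  exact neg_le_neg key

/-- Let `0 < a ≤ b` and let `S, S'` be `p × p` real symmetric matrices with
`a•I ⪯ S ⪯ b•I` and `a•I ⪯ S' ⪯ b•I` (Loewner order). Then
`Tr((S'⁻¹ - S⁻¹)(S' - S)) ≤ -(1/b²) ‖S' - S‖_F²`, where `‖M‖_F² = Tr(Mᵀ M)`. -/
theorem stmt3 {p : ℕ} (a b : ℝ) (ha : 0 < a) (hab : a ≤ b)
    (S S' : Matrix (Fin p) (Fin p) ℝ) (hS : S.IsSymm) (hS' : S'.IsSymm)
    (h1 : (S - a • (1 : Matrix (Fin p) (Fin p) ℝ)).PosSemidef)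
    (h2 : (b • (1 : Matrix (Fin p) (Fin p) ℝ) - S).PosSemidef)
    (h3 : (S' - a • (1 : Matrix (Fin p) (Fin p) ℝ)).PosSemidef)
    (h4 : (b • (1 : Matrix (Fin p) (Fin p) ℝ) - S').PosSemidef) :
    ((S'⁻¹ - S⁻¹) * (S' - S)).trace ≤ -(1 / b ^ 2) * ((S' - S)ᵀ * (S' - S)).trace :=
  stmt3_general a b ha hab S S' h1 h2 h3 h4
end

section
/- Let p, d be positive integers, γ > 0. Let U, V be p×p real symmetric negative definite matrices, S, Z ∈ ℝ^{p×d}, Λ, Γ d×d real symmetric matrices, C₁, C₂ d×d real symmetric positive definite matrices, and χ ∈ ℝ. Define, for K, K̄ ∈ ℝ^{p×d} and Σ a p×p real symmetric positive definite matrix, f(K, K̄, Σ) = Tr((Λ + SᵀK + KᵀS + KᵀUK)C₁) + Tr((Γ + ZᵀK̄ + K̄ᵀZ + K̄ᵀVK̄)C₂) + χ + (γ/2)·log det Σ + Tr(UΣ). Then f is concave on its (convex) domain, and (K*, K̄*, Σ*) = (−U⁻¹S, −V⁻¹Z, −(γ/2)U⁻¹) is its unique global maximizer: f(K, K̄, Σ)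 ≤ f(K*, K̄*, Σ*) for all admissible (K, K̄, Σ), with equality if and only if (K, K̄, Σ) = (K*, K̄*, Σ*). -/
/-!
Write `f = φ₁(K) + φ₂(K̄) + χ + ψ(Σ)`. Completing the square around `K* = -U⁻¹S` gives
`φ₁(K) = φ₁(K*) - Tr((K - K*)ᵀ(-U)(K - K*)C₁)`, and the subtracted trace is the squared Frobenius
norm of `A(K - K*)Bᵀ` where `-U = AᵀA`, `C₁ = BᵀB`; so it is `≥ 0` and vanishes only at `K = K*`.
Likewise for `φ₂`. Since `Tr(UΣ) = -(γ/2) Tr(Σ*⁻¹Σ)`, the `Σ`-part is governed by the tangent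
inequality `log det X ≤ log det Y + Tr(Y⁻¹X) - p` for positive definite `X, Y`, with equality only
at `X = Y`; a congruence reduces it to `Y = 1`, where it is `log λ ≤ λ - 1` summed over the
eigenvalues of `X`. Taking `Y` to be a convex combination of two points, the same inequality gives
the concavity of `log det`.
-/

open Matrix

/-- The discounted approximated Iq-function of the infinite-horizon LQ mean-field control
problem, as a function of the Gaussian policy parameters `(K, K̄, Σ)`. -/
noncomputable def iqFun {p d : ℕ} (γ : ℝ)
    (U V : Matrix (Fin p) (Fin p) ℝ) (S Z : Matrix (Fin p) (Fin d) ℝ)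
    (Λ Γ : Matrix (Fin d) (Fin d) ℝ) (C₁ C₂ : Matrix (Fin d) (Fin d) ℝ) (χ : ℝ)
    (x : Matrix (Fin p) (Fin d) ℝ × Matrix (Fin p) (Fin d) ℝ × Matrix (Fin p) (Fin p) ℝ) :
    ℝ :=
  ((Λ + Sᵀ * x.1 + x.1ᵀ * S + x.1ᵀ * U * x.1) * C₁).trace
    + ((Γ + Zᵀ * x.2.1 + x.2.1ᵀ * Z + x.2.1ᵀ * V * x.2.1) * C₂).trace
    + χ + γ / 2 * Real.log x.2.2.det + (U * x.2.2).trace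

open scoped MatrixOrder

namespace Matrix

variable {n m : Type*}

theorem convex_setOf_posDef : Convex ℝ {X : Matrix n n ℝ | X.PosDef} := by
  intro X hX Y hY a b ha hb hab
  rcases ha.eq_or_lt with rfl | ha
  · simpa [show b = 1 by linarith] using hY
  · exact (hX.smul ha).add_posSemidef (hY.posSemidef.smul hb)

variable [Fintype n] [Fintype m]

theorem isUnit_det_of_posDef_neg [DecidableEq n] {U : Matrix n n ℝ} (hU : (-U).PosDef) :
    IsUnit U.det :=
  (isUnit_iff_isUnit_det U).mp (by simpa using hU.isUnit.neg)

theorem PosSemidef.exists_eq_transpose_mul_self [DecidableEq n] {P : Matrix n n ℝ}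
    (hP : P.PosSemidef) : ∃ A : Matrix n n ℝ, P = Aᵀ * A := by
  obtain ⟨A, rfl⟩ := CStarAlgebra.nonneg_iff_eq_star_mul_self.mp hP.nonneg
  exact ⟨A, by rw [star_eq_conjTranspose, conjTranspose_eq_transpose_of_trivial]⟩

theorem isUnit_det_of_posDef_transpose_mul_self [DecidableEq n] {A : Matrix n n ℝ}
    (h : (Aᵀ * A).PosDef) : IsUnit A.det := by
  have hdet := (isUnit_iff_isUnit_det _).mp h.isUnit
  rw [det_mul] at hdet
  exact isUnit_of_mul_isUnit_right hdet

theorem trace_transpose_mul_mul_mul_eq {k l : Type*} [Fintype k] [Fintype l]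
    (A : Matrix k n ℝ) (B : Matrix l m ℝ) (M : Matrix n m ℝ) :
    (Mᵀ * (Aᵀ * A) * M * (Bᵀ * B)).trace = ((A * M * Bᵀ)ᵀ * (A * M * Bᵀ)).trace := by
  rw [← Matrix.mul_assoc _ Bᵀ B, trace_mul_comm]
  simp only [transpose_mul, transpose_transpose, Matrix.mul_assoc]

theorem trace_transpose_mul_mul_mul_nonneg [DecidableEq n] [DecidableEq m]
    {P : Matrix n n ℝ} {C : Matrix m m ℝ} (hP : P.PosSemidef) (hC : C.PosSemidef)
    (M : Matrix n m ℝ) : 0 ≤ (Mᵀ * P * M * C).trace := by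
  obtain ⟨A, rfl⟩ := hP.exists_eq_transpose_mul_self
  obtain ⟨B, rfl⟩ := hC.exists_eq_transpose_mul_self
  rw [trace_transpose_mul_mul_mul_eq]
  simpa using (posSemidef_conjTranspose_mul_self (A * M * Bᵀ)).trace_nonneg

theorem trace_transpose_mul_mul_mul_eq_zero_iff [DecidableEq n] [DecidableEq m]
    {P : Matrix n n ℝ} {C : Matrix m m ℝ} (hP : P.PosDef) (hC : C.PosDef)
    {M : Matrix n m ℝ} : (Mᵀ * P * M * C).trace = 0 ↔ M = 0 := by
  obtain ⟨A, rfl⟩ := hP.posSemidef.exists_eq_transpose_mul_self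
  obtain ⟨B, rfl⟩ := hC.posSemidef.exists_eq_transpose_mul_self
  have hA := isUnit_det_of_posDef_transpose_mul_self hP
  have hB : IsUnit Bᵀ.det := by simpa using isUnit_det_of_posDef_transpose_mul_self hC
  rw [trace_transpose_mul_mul_mul_eq, ← conjTranspose_eq_transpose_of_trivial,
    trace_conjTranspose_mul_self_eq_zero_iff]
  refine ⟨fun h => ?_, fun h => by rw [h, Matrix.mul_zero, Matrix.zero_mul]⟩
  calc M = A⁻¹ * (A * M * Bᵀ) * Bᵀ⁻¹ := by
        rw [Matrix.mul_assoc A, nonsing_inv_mul_cancel_left A (M * Bᵀ) hA,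
          mul_nonsing_inv_cancel_right Bᵀ M hB]
    _ = 0 := by rw [h, Matrix.mul_zero, Matrix.zero_mul]

theorem IsHermitian.eq_one_of_eigenvalues_eq_one [DecidableEq n] {M : Matrix n n ℝ}
    (hM : M.IsHermitian) (h : ∀ i, hM.eigenvalues i = 1) : M = 1 := by
  have hdiag : diagonal (RCLike.ofReal ∘ hM.eigenvalues) = (1 : Matrix n n ℝ) := by
    rw [← diagonal_one]
    exact congrArg diagonal (funext fun i => by simp [h i])
  rw [hM.spectral_theorem, Unitary.conjStarAlgAut_apply, hdiag, Matrix.mul_one,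
    Unitary.mul_star_self_of_mem (hM.eigenvectorUnitary).2]

theorem PosDef.trace_sub_card_sub_log_det_eq_sum [DecidableEq n] {M : Matrix n n ℝ}
    (hM : M.PosDef) :
    M.trace - Fintype.card n - Real.log M.det =
      ∑ i, (hM.1.eigenvalues i - 1 - Real.log (hM.1.eigenvalues i)) := by
  rw [hM.1.trace_eq_sum_eigenvalues, hM.1.det_eq_prod_eigenvalues]
  simp only [RCLike.ofReal_real_eq_id, id_eq]
  rw [Real.log_prod fun i _ => (hM.eigenvalues_pos i).ne']
  simp [Finset.sum_sub_distrib]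

theorem PosDef.log_det_le_trace_sub_card [DecidableEq n] {M : Matrix n n ℝ} (hM : M.PosDef) :
    Real.log M.det ≤ M.trace - Fintype.card n := by
  have hsum := hM.trace_sub_card_sub_log_det_eq_sum
  have hnonneg : 0 ≤ ∑ i, (hM.1.eigenvalues i - 1 - Real.log (hM.1.eigenvalues i)) :=
    Finset.sum_nonneg fun i _ => by
      linarith [Real.log_le_sub_one_of_pos (hM.eigenvalues_pos i)]
  linarith

theorem PosDef.log_det_eq_trace_sub_card_iff [DecidableEq n] {M : Matrix n n ℝ}
    (hM : M.PosDef) : Real.log M.det = M.trace - Fintype.card n ↔ M = 1 := by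
  refine ⟨fun h => hM.1.eq_one_of_eigenvalues_eq_one fun i => ?_, by rintro rfl; simp⟩
  have hsum := hM.trace_sub_card_sub_log_det_eq_sum
  rw [h, sub_self, eq_comm, Finset.sum_eq_zero_iff_of_nonneg fun i _ => by
    linarith [Real.log_le_sub_one_of_pos (hM.eigenvalues_pos i)]] at hsum
  by_contra hi
  linarith [Real.log_lt_sub_one_of_pos (hM.eigenvalues_pos i) hi, hsum i (Finset.mem_univ i)]

theorem PosDef.exists_log_det_sub_trace_inv_mul_eq [DecidableEq n] {X Y : Matrix n n ℝ}
    (hX : X.PosDef) (hY : Y.PosDef) :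
    ∃ M : Matrix n n ℝ, M.PosDef ∧ (M = 1 ↔ X = Y) ∧
      Real.log X.det - (Y⁻¹ * X).trace = Real.log Y.det + (Real.log M.det - M.trace) := by
  obtain ⟨B, rfl⟩ := hY.posSemidef.exists_eq_transpose_mul_self
  have hB := isUnit_det_of_posDef_transpose_mul_self hY
  have hBt : IsUnit Bᵀ.det := by rwa [det_transpose]
  obtain ⟨M, hM⟩ : ∃ M, M = B⁻¹ᵀ * X * B⁻¹ := ⟨_, rfl⟩
  have hXM : X = Bᵀ * M * B := by
    rw [hM, transpose_nonsing_inv]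
    simp only [← Matrix.mul_assoc]
    rw [nonsing_inv_mul_cancel_right B _ hB, mul_nonsing_inv _ hBt, Matrix.one_mul]
  have hMpos : M.PosDef := by
    have hinj : Function.Injective B⁻¹.mulVec := mulVec_injective_iff_isUnit.mpr
      (isUnit_nonsing_inv_iff.mpr (B.isUnit_iff_isUnit_det.mpr hB))
    simpa [hM, conjTranspose_eq_transpose_of_trivial] using hX.conjTranspose_mul_mul_same hinj
  refine ⟨M, hMpos, ⟨fun h => by rw [hXM, h, Matrix.mul_one], fun h => ?_⟩, ?_⟩
  · rw [hM, h, transpose_nonsing_inv, ← Matrix.mul_assoc, nonsing_inv_mul _ hBt, Matrix.one_mul,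
      mul_nonsing_inv _ hB]
  · have hdet : X.det = (Bᵀ * B).det * M.det := by
      rw [hXM, det_mul, det_mul, det_mul]; ring
    have htr : ((Bᵀ * B)⁻¹ * X).trace = M.trace := by
      rw [hXM, Matrix.mul_inv_rev, Matrix.mul_assoc, ← Matrix.mul_assoc Bᵀ⁻¹,
        ← Matrix.mul_assoc Bᵀ⁻¹, nonsing_inv_mul _ hBt, Matrix.one_mul, ← Matrix.mul_assoc,
        trace_mul_cycle, Matrix.mul_nonsing_inv _ hB, Matrix.one_mul]
    rw [hdet, Real.log_mul hY.det_pos.ne' hMpos.det_pos.ne', htr]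
    ring

theorem PosDef.log_det_sub_trace_inv_mul_le [DecidableEq n] {X Y : Matrix n n ℝ}
    (hX : X.PosDef) (hY : Y.PosDef) :
    Real.log X.det - (Y⁻¹ * X).trace ≤ Real.log Y.det - Fintype.card n := by
  obtain ⟨M, hM, -, heq⟩ := hX.exists_log_det_sub_trace_inv_mul_eq hY
  linarith [hM.log_det_le_trace_sub_card]

theorem PosDef.log_det_sub_trace_inv_mul_eq_iff [DecidableEq n] {X Y : Matrix n n ℝ}
    (hX : X.PosDef) (hY : Y.PosDef) :
    Real.log X.det - (Y⁻¹ * X).trace = Real.log Y.det - Fintype.card n ↔ X = Y := by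
  obtain ⟨M, hM, hM1, heq⟩ := hX.exists_log_det_sub_trace_inv_mul_eq hY
  rw [← hM1, ← hM.log_det_eq_trace_sub_card_iff, heq]
  constructor <;> intro h <;> linarith

theorem concaveOn_log_det [DecidableEq n] :
    ConcaveOn ℝ {X : Matrix n n ℝ | X.PosDef} fun X => Real.log X.det := by
  refine ⟨convex_setOf_posDef, fun X hX Y hY a b ha hb hab => ?_⟩
  set Z := a • X + b • Y
  have hZ : Z.PosDef := convex_setOf_posDef hX hY ha hb hab
  have hXZ := mul_le_mul_of_nonneg_left (PosDef.log_det_sub_trace_inv_mul_le hX hZ) ha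
  have hYZ := mul_le_mul_of_nonneg_left (PosDef.log_det_sub_trace_inv_mul_le hY hZ) hb
  have htr : a * (Z⁻¹ * X).trace + b * (Z⁻¹ * Y).trace = Fintype.card n := by
    have hZZ : (Z⁻¹ * Z).trace = Fintype.card n := by
      rw [nonsing_inv_mul _ ((isUnit_iff_isUnit_det _).mp hZ.isUnit), trace_one]
    simpa only [Z, Matrix.mul_add, Matrix.mul_smul, trace_add, trace_smul, smul_eq_mul] using hZZ
  have hsum (c : ℝ) : a * c + b * c = c := by rw [← add_mul, hab, one_mul]
  simp only [smul_eq_mul]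
  linarith [hsum (Real.log Z.det), hsum (Fintype.card n)]

end Matrix

section QuadraticPart

variable {n m : Type*} [Fintype n] [Fintype m]

def traceQuadratic (U : Matrix n n ℝ) (S : Matrix n m ℝ) (Λ C : Matrix m m ℝ)
    (K : Matrix n m ℝ) : ℝ :=
  ((Λ + Sᵀ * K + Kᵀ * S + Kᵀ * U * K) * C).trace

variable {U : Matrix n n ℝ} {S : Matrix n m ℝ} {Λ C : Matrix m m ℝ}

theorem traceQuadratic_smul_add_smul {a b : ℝ} (hab : a + b = 1) (K₁ K₂ : Matrix n m ℝ) :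
    traceQuadratic U S Λ C (a • K₁ + b • K₂) =
      a * traceQuadratic U S Λ C K₁ + b * traceQuadratic U S Λ C K₂
        + a * b * ((K₁ - K₂)ᵀ * -U * (K₁ - K₂) * C).trace := by
  obtain rfl : b = 1 - a := by linarith
  simp only [traceQuadratic, transpose_add, transpose_smul, transpose_sub, Matrix.add_mul,
    Matrix.mul_add, Matrix.sub_mul, Matrix.mul_sub, Matrix.mul_neg, Matrix.neg_mul,
    Matrix.mul_smul, Matrix.smul_mul, trace_add, trace_sub, trace_neg, trace_smul, smul_eq_mul]
  ring

theorem concaveOn_traceQuadratic [DecidableEq n] [DecidableEq m] (hU : (-U).PosSemidef)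
    (hC : C.PosSemidef) : ConcaveOn ℝ Set.univ (traceQuadratic U S Λ C) := by
  refine ⟨convex_univ, fun K₁ _ K₂ _ a b ha hb hab => ?_⟩
  rw [traceQuadratic_smul_add_smul hab, smul_eq_mul, smul_eq_mul]
  nlinarith [mul_nonneg (mul_nonneg ha hb) (trace_transpose_mul_mul_mul_nonneg hU hC (K₁ - K₂))]

theorem traceQuadratic_eq_sub (hU : Uᵀ = U) {K₀ : Matrix n m ℝ} (hK₀ : U * K₀ = -S)
    (K : Matrix n m ℝ) :
    traceQuadratic U S Λ C K =
      traceQuadratic U S Λ C K₀ - ((K - K₀)ᵀ * -U * (K - K₀) * C).trace := by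
  obtain ⟨D, rfl⟩ : ∃ D, K = K₀ + D := ⟨K - K₀, by abel⟩
  have hK₀' : K₀ᵀ * U = -Sᵀ := by rw [← hU, ← transpose_mul, hK₀, transpose_neg]
  have hD : Dᵀ * U * K₀ = -(Dᵀ * S) := by rw [Matrix.mul_assoc, hK₀, Matrix.mul_neg]
  simp only [traceQuadratic, add_sub_cancel_left, transpose_add, Matrix.add_mul, Matrix.mul_add,
    hK₀', hD, Matrix.neg_mul, Matrix.mul_neg, trace_add, trace_neg]
  ring

variable [DecidableEq n]

theorem traceQuadratic_eq_sub_of_posDef_neg (hU : (-U).PosDef) (K : Matrix n m ℝ) :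
    traceQuadratic U S Λ C K = traceQuadratic U S Λ C (-(U⁻¹ * S)) -
      ((K - -(U⁻¹ * S))ᵀ * -U * (K - -(U⁻¹ * S)) * C).trace := by
  have hUt : Uᵀ = U := by
    simpa [conjTranspose_eq_transpose_of_trivial] using hU.1.eq
  exact traceQuadratic_eq_sub hUt
    (by rw [Matrix.mul_neg, mul_nonsing_inv_cancel_left _ _ (isUnit_det_of_posDef_neg hU)]) K

theorem traceQuadratic_le [DecidableEq m] (hU : (-U).PosDef) (hC : C.PosSemidef)
    (K : Matrix n m ℝ) : traceQuadratic U S Λ C K ≤ traceQuadratic U S Λ C (-(U⁻¹ * S)) := by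
  rw [traceQuadratic_eq_sub_of_posDef_neg hU K]
  linarith [trace_transpose_mul_mul_mul_nonneg hU.posSemidef hC (K - -(U⁻¹ * S))]

theorem traceQuadratic_eq_iff [DecidableEq m] (hU : (-U).PosDef) (hC : C.PosDef)
    {K : Matrix n m ℝ} :
    traceQuadratic U S Λ C K = traceQuadratic U S Λ C (-(U⁻¹ * S)) ↔ K = -(U⁻¹ * S) := by
  rw [traceQuadratic_eq_sub_of_posDef_neg hU K, sub_eq_self,
    trace_transpose_mul_mul_mul_eq_zero_iff hU hC, sub_eq_zero]

end QuadraticPart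

section LogDetPart

variable {n : Type*} [Fintype n] [DecidableEq n] {γ : ℝ} {U : Matrix n n ℝ}

noncomputable def logDetTrace (γ : ℝ) (U Sig : Matrix n n ℝ) : ℝ :=
  γ / 2 * Real.log Sig.det + (U * Sig).trace

theorem concaveOn_logDetTrace (hγ : 0 ≤ γ) (U : Matrix n n ℝ) :
    ConcaveOn ℝ {Sig : Matrix n n ℝ | Sig.PosDef} (logDetTrace γ U) :=
  (concaveOn_log_det.smul (by positivity : 0 ≤ γ / 2)).add
    (((traceLinearMap n ℝ ℝ).comp (LinearMap.mulLeft ℝ U)).concaveOn convex_setOf_posDef)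

theorem posDef_neg_smul_inv (hγ : 0 < γ) (hU : (-U).PosDef) : ((-(γ / 2)) • U⁻¹).PosDef := by
  have hinv : (-U)⁻¹ = -U⁻¹ := inv_eq_right_inv (by
    rw [Matrix.neg_mul, Matrix.mul_neg, neg_neg, mul_nonsing_inv _ (isUnit_det_of_posDef_neg hU)])
  simpa [hinv] using hU.inv.smul (by positivity : 0 < γ / 2)

theorem logDetTrace_eq_mul (hγ : γ ≠ 0) (hU : IsUnit U.det) (Sig : Matrix n n ℝ) :
    logDetTrace γ U Sig =
      γ / 2 * (Real.log Sig.det - (((-(γ / 2)) • U⁻¹)⁻¹ * Sig).trace) := by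
  have hinv : ((-(γ / 2)) • U⁻¹)⁻¹ = (-(2 / γ)) • U := by
    refine inv_eq_right_inv ?_
    rw [Matrix.smul_mul, Matrix.mul_smul, smul_smul, nonsing_inv_mul _ hU,
      show -(γ / 2) * -(2 / γ) = 1 by field_simp, one_smul]
  rw [logDetTrace, hinv, Matrix.smul_mul, trace_smul, smul_eq_mul]
  field_simp
  ring

theorem logDetTrace_neg_smul_inv (hγ : 0 < γ) (hU : (-U).PosDef) :
    logDetTrace γ U ((-(γ / 2)) • U⁻¹) =
      γ / 2 * (Real.log ((-(γ / 2)) • U⁻¹).det - Fintype.card n) := by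
  have hopt := (isUnit_iff_isUnit_det _).mp (posDef_neg_smul_inv hγ hU).isUnit
  rw [logDetTrace_eq_mul hγ.ne' (isUnit_det_of_posDef_neg hU), nonsing_inv_mul _ hopt, trace_one]

theorem logDetTrace_le (hγ : 0 < γ) (hU : (-U).PosDef) {Sig : Matrix n n ℝ}
    (hSig : Sig.PosDef) : logDetTrace γ U Sig ≤ logDetTrace γ U ((-(γ / 2)) • U⁻¹) := by
  rw [logDetTrace_eq_mul hγ.ne' (isUnit_det_of_posDef_neg hU), logDetTrace_neg_smul_inv hγ hU]
  exact mul_le_mul_of_nonneg_left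
    (hSig.log_det_sub_trace_inv_mul_le (posDef_neg_smul_inv hγ hU)) (by positivity)

theorem logDetTrace_eq_iff (hγ : 0 < γ) (hU : (-U).PosDef) {Sig : Matrix n n ℝ}
    (hSig : Sig.PosDef) :
    logDetTrace γ U Sig = logDetTrace γ U ((-(γ / 2)) • U⁻¹) ↔ Sig = (-(γ / 2)) • U⁻¹ := by
  rw [logDetTrace_eq_mul hγ.ne' (isUnit_det_of_posDef_neg hU), logDetTrace_neg_smul_inv hγ hU,
    mul_right_inj' (by positivity)]
  exact hSig.log_det_sub_trace_inv_mul_eq_iff (posDef_neg_smul_inv hγ hU)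

end LogDetPart

section IqFunction

variable {p d : ℕ} {γ : ℝ} {U V : Matrix (Fin p) (Fin p) ℝ} {S Z : Matrix (Fin p) (Fin d) ℝ}
  {Λ Γ C₁ C₂ : Matrix (Fin d) (Fin d) ℝ} {χ : ℝ}

theorem iqFun_eq
    (x : Matrix (Fin p) (Fin d) ℝ × Matrix (Fin p) (Fin d) ℝ × Matrix (Fin p) (Fin p) ℝ) :
    iqFun γ U V S Z Λ Γ C₁ C₂ χ x = traceQuadratic U S Λ C₁ x.1 + traceQuadratic V Z Γ C₂ x.2.1
      + χ + logDetTrace γ U x.2.2 := by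
  simp only [iqFun, traceQuadratic, logDetTrace]
  ring

theorem concaveOn_iqFun (hγ : 0 ≤ γ) (hU : (-U).PosSemidef) (hV : (-V).PosSemidef)
    (hC₁ : C₁.PosSemidef) (hC₂ : C₂.PosSemidef) :
    ConcaveOn ℝ {x : Matrix (Fin p) (Fin d) ℝ × Matrix (Fin p) (Fin d) ℝ ×
        Matrix (Fin p) (Fin p) ℝ | x.2.2.PosDef} (iqFun γ U V S Z Λ Γ C₁ C₂ χ) := by
  let σ := LinearMap.snd ℝ (Matrix (Fin p) (Fin d) ℝ) (Matrix (Fin p) (Fin p) ℝ) ∘ₗ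
    LinearMap.snd ℝ (Matrix (Fin p) (Fin d) ℝ) _
  have hdom : Convex ℝ {x : Matrix (Fin p) (Fin d) ℝ × Matrix (Fin p) (Fin d) ℝ ×
      Matrix (Fin p) (Fin p) ℝ | x.2.2.PosDef} :=
    convex_setOf_posDef.linear_preimage σ
  have h₁ := ((concaveOn_traceQuadratic (S := S) (Λ := Λ) hU hC₁).comp_linearMap
    (LinearMap.fst ℝ _ _)).subset (Set.subset_univ _) hdom
  have h₂ := ((concaveOn_traceQuadratic (S := Z) (Λ := Γ) hV hC₂).comp_linearMap
    (LinearMap.fst ℝ _ _ ∘ₗ LinearMap.snd ℝ _ _)).subset (Set.subset_univ _) hdom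
  have h₃ := (concaveOn_logDetTrace hγ U).comp_linearMap σ
  exact (((h₁.add h₂).add_const χ).add h₃).congr fun x _ => (iqFun_eq x).symm

end IqFunction

theorem stmt9_general {p d : ℕ} (γ : ℝ) (hγ : 0 < γ)
    (U V : Matrix (Fin p) (Fin p) ℝ) (hU : (-U).PosDef) (hV : (-V).PosDef)
    (S Z : Matrix (Fin p) (Fin d) ℝ)
    (Λ Γ : Matrix (Fin d) (Fin d) ℝ)
    (C₁ C₂ : Matrix (Fin d) (Fin d) ℝ) (hC₁ : C₁.PosDef) (hC₂ : C₂.PosDef)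
    (χ : ℝ) :
    ConcaveOn ℝ {x : Matrix (Fin p) (Fin d) ℝ × Matrix (Fin p) (Fin d) ℝ ×
        Matrix (Fin p) (Fin p) ℝ | x.2.2.PosDef}
      (iqFun γ U V S Z Λ Γ C₁ C₂ χ) ∧
    ((-(γ / 2)) • U⁻¹).PosDef ∧
    ∀ K K' : Matrix (Fin p) (Fin d) ℝ, ∀ Sig : Matrix (Fin p) (Fin p) ℝ, Sig.PosDef →
      (iqFun γ U V S Z Λ Γ C₁ C₂ χ (K, K', Sig) ≤
        iqFun γ U V S Z Λ Γ C₁ C₂ χ (-(U⁻¹ * S), -(V⁻¹ * Z), (-(γ / 2)) • U⁻¹) ∧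
      (iqFun γ U V S Z Λ Γ C₁ C₂ χ (K, K', Sig) =
        iqFun γ U V S Z Λ Γ C₁ C₂ χ (-(U⁻¹ * S), -(V⁻¹ * Z), (-(γ / 2)) • U⁻¹) ↔
        (K, K', Sig) = (-(U⁻¹ * S), -(V⁻¹ * Z), (-(γ / 2)) • U⁻¹))) := by
  refine ⟨concaveOn_iqFun hγ.le hU.posSemidef hV.posSemidef hC₁.posSemidef hC₂.posSemidef,
    posDef_neg_smul_inv hγ hU, fun K K' Sig hSig => ?_⟩
  have hK := traceQuadratic_le (S := S) (Λ := Λ) hU hC₁.posSemidef K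
  have hK' := traceQuadratic_le (S := Z) (Λ := Γ) hV hC₂.posSemidef K'
  have hSig' := logDetTrace_le hγ hU hSig
  rw [iqFun_eq, iqFun_eq, Prod.mk.injEq, Prod.mk.injEq, ← traceQuadratic_eq_iff (Λ := Λ) hU hC₁,
    ← traceQuadratic_eq_iff (Λ := Γ) hV hC₂, ← logDetTrace_eq_iff hγ hU hSig]
  exact ⟨by linarith, fun h => ⟨by linarith, by linarith, by linarith⟩,
    fun ⟨h₁, h₂, h₃⟩ => by linarith⟩

/-- With `γ > 0`, `U, V` real symmetric negative definite, `Λ, Γ` symmetric,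
`C₁, C₂` symmetric positive definite and `χ ∈ ℝ`, the function
`f(K, K̄, Σ) = Tr((Λ + SᵀK + KᵀS + KᵀUK)C₁) + Tr((Γ + ZᵀK̄ + K̄ᵀZ + K̄ᵀVK̄)C₂) + χ
 + (γ/2) log det Σ + Tr(UΣ)` is concave on its convex domain
`{(K, K̄, Σ) : Σ symmetric positive definite}`, and
`(K*, K̄*, Σ*) = (-U⁻¹S, -V⁻¹Z, -(γ/2)U⁻¹)` is its unique global maximizer. -/
theorem stmt9 {p d : ℕ} (γ : ℝ) (hγ : 0 < γ)
    (U V : Matrix (Fin p) (Fin p) ℝ) (hU : (-U).PosDef) (hV : (-V).PosDef)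
    (S Z : Matrix (Fin p) (Fin d) ℝ)
    (Λ Γ : Matrix (Fin d) (Fin d) ℝ) (hΛ : Λ.IsSymm) (hΓ : Γ.IsSymm)
    (C₁ C₂ : Matrix (Fin d) (Fin d) ℝ) (hC₁ : C₁.PosDef) (hC₂ : C₂.PosDef)
    (χ : ℝ) :
    ConcaveOn ℝ {x : Matrix (Fin p) (Fin d) ℝ × Matrix (Fin p) (Fin d) ℝ ×
        Matrix (Fin p) (Fin p) ℝ | x.2.2.PosDef}
      (iqFun γ U V S Z Λ Γ C₁ C₂ χ) ∧
    ((-(γ / 2)) • U⁻¹).PosDef ∧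
    ∀ K K' : Matrix (Fin p) (Fin d) ℝ, ∀ Sig : Matrix (Fin p) (Fin p) ℝ, Sig.PosDef →
      (iqFun γ U V S Z Λ Γ C₁ C₂ χ (K, K', Sig) ≤
        iqFun γ U V S Z Λ Γ C₁ C₂ χ (-(U⁻¹ * S), -(V⁻¹ * Z), (-(γ / 2)) • U⁻¹) ∧
      (iqFun γ U V S Z Λ Γ C₁ C₂ χ (K, K', Sig) =
        iqFun γ U V S Z Λ Γ C₁ C₂ χ (-(U⁻¹ * S), -(V⁻¹ * Z), (-(γ / 2)) • U⁻¹) ↔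
        (K, K', Sig) = (-(U⁻¹ * S), -(V⁻¹ * Z), (-(γ / 2)) • U⁻¹))) :=
  stmt9_general γ hγ U V hU hV S Z Λ Γ C₁ C₂ hC₁ hC₂ χ
end
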